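/- arXiv:2004.04341 — 6 statements merged into one kernel-verified Lean document; each statement's English description precedes it below -/
import Mathlib

section
/- Let n > p ≥ 1, let R be an n×n real symmetric positive definite matrix, let X be an n×p real matrix of full column rank, let y ∈ ℝ^n, let σ² > 0 and ν > 0. Define the multivariate Student-t density f_{ν,Σ}(z) = Γ((ν+n)/2) ν^{ν/2} / (Γ(ν/2) π^{n/2} (det Σ)^{1/2}) · (ν + zᵀΣ⁻¹z)^{-(ν+n)/2}, the generalized least squares estimator β̂ = (XᵀR⁻¹X)⁻¹XᵀR⁻¹y, and S̃ = (y − Xβ̂)ᵀR⁻¹(y − Xβ̂). Then ∫_{ℝ^p} f_{ν,σ²R}(y − Xβ) dβ = [Γ((ν+n−p)/2) ν^{ν/2} / (Γ(ν/2) π^{(n−p)/2})] · (σ²)^{-(n−p)/2} (det R)^{-1/2} (det(XᵀR⁻¹X))^{-1/2} · (ν + S̃/σ²)^{-(ν+n−p)/2}. -/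
/-!
The GLS decomposition `(y - Xβ)ᵀR⁻¹(y - Xβ) = S̃ + (β - β̂)ᵀ(XᵀR⁻¹X)(β - β̂)` turns the
integrand into a multivariate Student-t kernel `(a + (β - β̂)ᵀM(β - β̂))^(-s)` with
`a = ν + S̃/σ²`, `M = σ⁻²XᵀR⁻¹X` and `s = (ν + n)/2`. Such a kernel is a Gamma mixture of
Gaussians, `a^(-s) = Γ(s)⁻¹ ∫₀^∞ t^(s-1) e^(-at) dt`. After swapping the two integrals, the
inner one is the Gaussian integral `∫ exp(-t xᵀMx) dx = π^(p/2) (det M)^(-1/2) t^(-p/2)`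
(a linear change of variables by `√M`), and the outer one is again a Gamma integral, now with
exponent `s - p/2`.
-/

open MeasureTheory Matrix Real Set

theorem Matrix.mulVec_injective_of_rank_eq_card {K m n : Type*} [Field K] [Fintype m]
    [Fintype n] {A : Matrix m n K} (h : A.rank = Fintype.card n) :
    Function.Injective A.mulVec := by
  rw [mulVec_injective_iff, linearIndependent_iff_card_eq_finrank_span, Set.finrank,
    ← rank_eq_finrank_span_cols, h]

theorem Matrix.det_smul_rpow {n : Type*} [Fintype n] [DecidableEq n] {A : Matrix n n ℝ}
    (hA : 0 ≤ A.det) {c : ℝ} (hc : 0 ≤ c) (r : ℝ) :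
    (c • A).det ^ r = c ^ ((Fintype.card n : ℝ) * r) * A.det ^ r := by
  rw [det_smul, mul_rpow (by positivity) hA, ← rpow_natCast, ← rpow_mul hc]

theorem Matrix.dotProduct_mulVec_sub_mulVec_eq_gls {m n : Type*} [Fintype m] [Fintype n]
    [DecidableEq n] {W : Matrix m m ℝ} (hW : Wᵀ = W) (X : Matrix m n ℝ)
    (hM : IsUnit (Xᵀ * W * X).det)
    (y : m → ℝ) (β : n → ℝ) :
    (y - X *ᵥ β) ⬝ᵥ W *ᵥ (y - X *ᵥ β)
      = (y - X *ᵥ (((Xᵀ * W * X)⁻¹ * Xᵀ * W) *ᵥ y)) ⬝ᵥ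
          W *ᵥ (y - X *ᵥ (((Xᵀ * W * X)⁻¹ * Xᵀ * W) *ᵥ y))
        + (β - ((Xᵀ * W * X)⁻¹ * Xᵀ * W) *ᵥ y) ⬝ᵥ
            (Xᵀ * W * X) *ᵥ (β - ((Xᵀ * W * X)⁻¹ * Xᵀ * W) *ᵥ y) := by
  set M := Xᵀ * W * X
  set βh := (M⁻¹ * Xᵀ * W) *ᵥ y
  set e := y - X *ᵥ βh
  have adjoint (w : n → ℝ) (v : m → ℝ) : (X *ᵥ w) ⬝ᵥ v = w ⬝ᵥ Xᵀ *ᵥ v := by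
    rw [dotProduct_mulVec, vecMul_transpose]
  have normal_eq : (Xᵀ * W) *ᵥ e = 0 := by
    rw [mulVec_sub, mulVec_mulVec, mulVec_mulVec,
      Matrix.mul_assoc M⁻¹, mul_nonsing_inv_cancel_left _ _ hM, sub_self]
  have cross (w : n → ℝ) : (X *ᵥ w) ⬝ᵥ W *ᵥ e = 0 := by
    rw [adjoint, mulVec_mulVec, normal_eq, dotProduct_zero]
  have gram (w : n → ℝ) : (X *ᵥ w) ⬝ᵥ W *ᵥ (X *ᵥ w) = w ⬝ᵥ M *ᵥ w := by
    rw [adjoint, mulVec_mulVec, mulVec_mulVec]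
  have symm (u v : m → ℝ) : u ⬝ᵥ W *ᵥ v = v ⬝ᵥ W *ᵥ u := by
    rw [dotProduct_mulVec, ← mulVec_transpose, hW, dotProduct_comm]
  have split : y - X *ᵥ β = e + X *ᵥ (-(β - βh)) := by
    simp only [e, mulVec_neg, mulVec_sub]; abel
  rw [split, add_dotProduct, mulVec_add, dotProduct_add, dotProduct_add, symm e, cross, gram]
  simp only [mulVec_neg, dotProduct_neg, neg_dotProduct, neg_neg, symm e, cross]
  ring

theorem Real.rpow_neg_eq_integral {a s : ℝ} (ha : 0 < a) (hs : 0 < s) :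
    a ^ (-s) = (Gamma s)⁻¹ * ∫ t in Ioi 0, t ^ (s - 1) * exp (-(a * t)) := by
  rw [integral_rpow_mul_exp_neg_mul_Ioi hs ha, one_div, inv_rpow ha.le, ← rpow_neg ha.le,
    mul_comm (a ^ (-s)), inv_mul_cancel_left₀ (Gamma_pos_of_pos hs).ne']

theorem Real.integrableOn_rpow_mul_exp_neg_mul_Ioi {a s : ℝ} (ha : 0 < a) (hs : 0 < s) :
    IntegrableOn (fun t => t ^ (s - 1) * exp (-(a * t))) (Ioi 0) :=
  .of_integral_ne_zero <| by
    rw [integral_rpow_mul_exp_neg_mul_Ioi hs ha]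
    have := Gamma_pos_of_pos hs
    positivity

section

variable {ι : Type*} [Fintype ι] [DecidableEq ι]

theorem Matrix.integral_comp_mulVec {S : Matrix ι ι ℝ} (hS : S.det ≠ 0)
    (f : (ι → ℝ) → ℝ) : ∫ x, f (S *ᵥ x) = |S.det|⁻¹ * ∫ z, f z := by
  let := invertibleOfIsUnitDet S (isUnit_iff_ne_zero.mpr hS)
  have hemb : MeasurableEmbedding (toLin' S) :=
    (toLinearEquiv' S this).toContinuousLinearEquiv.toHomeomorph.measurableEmbedding
  rw [show (fun x => f (S *ᵥ x)) = fun x => f (toLin' S x) from rfl, ← hemb.integral_map,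
    Real.map_matrix_volume_pi_eq_smul_volume_pi hS, integral_smul_measure,
    ENNReal.toReal_ofReal (abs_nonneg _), smul_eq_mul, abs_inv]

open scoped MatrixOrder in
theorem Matrix.PosDef.integral_exp_neg_dotProduct_mulVec {M : Matrix ι ι ℝ} (hM : M.PosDef) :
    ∫ x, exp (-(x ⬝ᵥ M *ᵥ x)) = π ^ ((Fintype.card ι : ℝ) / 2) * M.det ^ (-(1 : ℝ) / 2) := by
  set S := CFC.sqrt M
  have hSS : S * S = M := CFC.sqrt_mul_sqrt_self M hM.posSemidef.nonneg
  have hST : Sᵀ = S := (CFC.sqrt_nonneg M).posSemidef.1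
  have hdet : S.det ^ 2 = M.det := by rw [sq, ← det_mul, hSS]
  have hS : S.det ≠ 0 := fun h => hM.det_pos.ne' (by rw [← hdet, h, sq, zero_mul])
  have hquad (x : ι → ℝ) : x ⬝ᵥ M *ᵥ x = ∑ i, (S *ᵥ x) i ^ 2 := by
    rw [← hSS, ← mulVec_mulVec, dotProduct_mulVec, ← mulVec_transpose, hST]
    simp only [dotProduct, sq]
  have hgauss : ∫ t : ℝ, exp (-t ^ 2) = √π := by simpa using integral_gaussian 1
  calc ∫ x, exp (-(x ⬝ᵥ M *ᵥ x))
      = ∫ x, ∏ i, exp (-(S *ᵥ x) i ^ 2) := by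
        simp only [hquad, ← exp_sum, ← Finset.sum_neg_distrib]
    _ = |S.det|⁻¹ * (√π) ^ Fintype.card ι := by
        rw [integral_comp_mulVec hS fun z => ∏ i, exp (-z i ^ 2),
          integral_fintype_prod_volume_eq_prod (fun _ t => exp (-t ^ 2)), hgauss,
          Finset.prod_const, Finset.card_univ]
    _ = π ^ ((Fintype.card ι : ℝ) / 2) * M.det ^ (-(1 : ℝ) / 2) := by
        rw [← sqrt_sq_eq_abs, hdet, sqrt_eq_rpow, sqrt_eq_rpow, ← rpow_natCast,
          ← rpow_mul pi_pos.le, ← rpow_neg hM.det_pos.le]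
        ring_nf

namespace Matrix.PosDef

variable {M : Matrix ι ι ℝ}

theorem integrable_exp_neg_dotProduct_mulVec (hM : M.PosDef) :
    Integrable fun x : ι → ℝ => exp (-(x ⬝ᵥ M *ᵥ x)) :=
  .of_integral_ne_zero <| by
    rw [hM.integral_exp_neg_dotProduct_mulVec]
    have := hM.det_pos
    positivity

theorem integral_exp_neg_mul_dotProduct_mulVec (hM : M.PosDef) {t : ℝ} (ht : 0 < t) :
    ∫ x, exp (-(t * (x ⬝ᵥ M *ᵥ x)))
      = π ^ ((Fintype.card ι : ℝ) / 2) * M.det ^ (-(1 : ℝ) / 2) *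
          t ^ (-((Fintype.card ι : ℝ) / 2)) := by
  simp_rw [← smul_eq_mul, ← dotProduct_smul, ← smul_mulVec]
  rw [(hM.smul ht).integral_exp_neg_dotProduct_mulVec, det_smul_rpow hM.det_pos.le ht.le]
  ring_nf

theorem integrable_exp_neg_mul_dotProduct_mulVec (hM : M.PosDef) {t : ℝ} (ht : 0 < t) :
    Integrable fun x : ι → ℝ => exp (-(t * (x ⬝ᵥ M *ᵥ x))) := by
  simp_rw [← smul_eq_mul, ← dotProduct_smul, ← smul_mulVec]
  exact (hM.smul ht).integrable_exp_neg_dotProduct_mulVec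

variable {a s : ℝ}

theorem integral_rpow_mul_exp_mul_exp_neg_mul_dotProduct_mulVec (hM : M.PosDef) {t : ℝ}
    (ht : 0 < t) :
    ∫ x, t ^ (s - 1) * exp (-(a * t)) * exp (-(t * (x ⬝ᵥ M *ᵥ x)))
      = π ^ ((Fintype.card ι : ℝ) / 2) * M.det ^ (-(1 : ℝ) / 2) *
          (t ^ (s - (Fintype.card ι : ℝ) / 2 - 1) * exp (-(a * t))) := by
  rw [integral_const_mul, hM.integral_exp_neg_mul_dotProduct_mulVec ht,
    show s - (Fintype.card ι : ℝ) / 2 - 1 = s - 1 + -((Fintype.card ι : ℝ) / 2) by ring,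
    rpow_add ht]
  ring

theorem integrable_rpow_mul_exp_mul_exp_neg_mul_dotProduct_mulVec (hM : M.PosDef)
    (ha : 0 < a) (hs : (Fintype.card ι : ℝ) / 2 < s) :
    Integrable (fun q : ℝ × (ι → ℝ) =>
        q.1 ^ (s - 1) * exp (-(a * q.1)) * exp (-(q.1 * (q.2 ⬝ᵥ M *ᵥ q.2))))
      ((volume.restrict (Ioi 0)).prod volume) := by
  have hmeas : AEStronglyMeasurable (fun q : ℝ × (ι → ℝ) =>
      q.1 ^ (s - 1) * exp (-(a * q.1)) * exp (-(q.1 * (q.2 ⬝ᵥ M *ᵥ q.2))))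
      ((volume.restrict (Ioi 0)).prod volume) := by
    refine Measurable.aestronglyMeasurable ?_
    simp only [dotProduct, mulVec]
    fun_prop
  refine (integrable_prod_iff hmeas).mpr ⟨?_, ?_⟩
  · filter_upwards [ae_restrict_mem measurableSet_Ioi] with t ht
    exact (hM.integrable_exp_neg_mul_dotProduct_mulVec ht).const_mul _
  · refine IntegrableOn.congr_fun ((integrableOn_rpow_mul_exp_neg_mul_Ioi ha
      (sub_pos.mpr hs)).const_mul (π ^ ((Fintype.card ι : ℝ) / 2) * M.det ^ (-(1 : ℝ) / 2)))
      (fun t ht => ?_) measurableSet_Ioi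
    have ht : 0 < t := ht
    simp only [norm_mul, norm_of_nonneg (rpow_nonneg ht.le _), norm_eq_abs, abs_exp]
    rw [hM.integral_rpow_mul_exp_mul_exp_neg_mul_dotProduct_mulVec ht]

theorem integral_rpow_neg_add_dotProduct_mulVec (hM : M.PosDef) (ha : 0 < a)
    (hs : (Fintype.card ι : ℝ) / 2 < s) (b : ι → ℝ) :
    ∫ x, (a + (x - b) ⬝ᵥ M *ᵥ (x - b)) ^ (-s)
      = π ^ ((Fintype.card ι : ℝ) / 2) * Gamma (s - (Fintype.card ι : ℝ) / 2) / Gamma s *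
          M.det ^ (-(1 : ℝ) / 2) * a ^ ((Fintype.card ι : ℝ) / 2 - s) := by
  have hs0 : 0 < s := lt_of_le_of_lt (by positivity) hs
  have mixture (x : ι → ℝ) : (a + x ⬝ᵥ M *ᵥ x) ^ (-s) = (Gamma s)⁻¹ *
      ∫ t in Ioi 0, t ^ (s - 1) * exp (-(a * t)) * exp (-(t * (x ⬝ᵥ M *ᵥ x))) := by
    have hQ : 0 ≤ x ⬝ᵥ M *ᵥ x := by simpa using hM.posSemidef.dotProduct_mulVec_nonneg x
    rw [rpow_neg_eq_integral (by positivity) hs0]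
    congr 2 with t
    rw [mul_assoc, ← exp_add]
    ring_nf
  rw [integral_sub_right_eq_self (fun x => (a + x ⬝ᵥ M *ᵥ x) ^ (-s)) b]
  simp_rw [mixture]
  rw [integral_const_mul,
    ← integral_integral_swap (hM.integrable_rpow_mul_exp_mul_exp_neg_mul_dotProduct_mulVec ha hs),
    setIntegral_congr_fun measurableSet_Ioi
      fun t ht => hM.integral_rpow_mul_exp_mul_exp_neg_mul_dotProduct_mulVec ht,
    integral_const_mul, integral_rpow_mul_exp_neg_mul_Ioi (sub_pos.mpr hs) ha, one_div,
    inv_rpow ha.le, ← rpow_neg ha.le, neg_sub]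
  ring

end Matrix.PosDef

end

theorem Matrix.PosDef.integral_rpow_neg_add_weighted_residual {m n : Type*} [Fintype m]
    [DecidableEq m] [Fintype n] [DecidableEq n] {R : Matrix m m ℝ} (hR : R.PosDef)
    {X : Matrix m n ℝ} (hX : Function.Injective X.mulVec) (y : m → ℝ) {c a s : ℝ}
    (hc : 0 < c) (ha : 0 < a) (hs : (Fintype.card n : ℝ) / 2 < s) :
    ∫ β, (a + (y - X *ᵥ β) ⬝ᵥ (c • R)⁻¹ *ᵥ (y - X *ᵥ β)) ^ (-s)
      = π ^ ((Fintype.card n : ℝ) / 2) * Gamma (s - (Fintype.card n : ℝ) / 2) / Gamma s *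
          c ^ ((Fintype.card n : ℝ) / 2) * (Xᵀ * R⁻¹ * X).det ^ (-(1 : ℝ) / 2) *
          (a + (y - X *ᵥ (((Xᵀ * R⁻¹ * X)⁻¹ * Xᵀ * R⁻¹) *ᵥ y)) ⬝ᵥ
            R⁻¹ *ᵥ (y - X *ᵥ (((Xᵀ * R⁻¹ * X)⁻¹ * Xᵀ * R⁻¹) *ᵥ y)) / c) ^
            ((Fintype.card n : ℝ) / 2 - s) := by
  have hM : (Xᵀ * R⁻¹ * X).PosDef := by simpa using hR.inv.conjTranspose_mul_mul_same hX
  have hW : R⁻¹ᵀ = R⁻¹ := by simpa using hR.inv.isHermitian.eq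
  set M := Xᵀ * R⁻¹ * X
  set βh := (M⁻¹ * Xᵀ * R⁻¹) *ᵥ y
  set S := (y - X *ᵥ βh) ⬝ᵥ R⁻¹ *ᵥ (y - X *ᵥ βh)
  have hS : 0 ≤ S := by
    simpa only [star_trivial] using hR.inv.posSemidef.dotProduct_mulVec_nonneg (y - X *ᵥ βh)
  have hinv : (c • R)⁻¹ = c⁻¹ • R⁻¹ :=
    Matrix.inv_smul' R (Units.mk0 c hc.ne') hR.det_pos.ne'.isUnit
  have hquad (β : n → ℝ) : a + (y - X *ᵥ β) ⬝ᵥ (c • R)⁻¹ *ᵥ (y - X *ᵥ β)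
      = (a + S / c) + (β - βh) ⬝ᵥ (c⁻¹ • M) *ᵥ (β - βh) := by
    rw [hinv, smul_mulVec, smul_mulVec, dotProduct_smul, dotProduct_smul,
      dotProduct_mulVec_sub_mulVec_eq_gls hW X hM.det_pos.ne'.isUnit, smul_eq_mul, smul_eq_mul]
    ring
  simp_rw [hquad]
  rw [(hM.smul (inv_pos.mpr hc)).integral_rpow_neg_add_dotProduct_mulVec (by positivity) hs,
    det_smul_rpow hM.det_pos.le (inv_pos.mpr hc).le, inv_rpow hc.le, ← rpow_neg hc.le]
  ring_nf

theorem stmt4_general (n p : ℕ) (hnp : p < n)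
    (R : Matrix (Fin n) (Fin n) ℝ) (hR : R.PosDef)
    (X : Matrix (Fin n) (Fin p) ℝ) (hX : X.rank = p)
    (y : Fin n → ℝ) (σ2 ν : ℝ) (hσ : 0 < σ2) (hν : 0 < ν) :
    ∫ β : Fin p → ℝ,
      Real.Gamma ((ν + n) / 2) * ν ^ (ν / 2) /
        (Real.Gamma (ν / 2) * π ^ ((n : ℝ) / 2) * (σ2 • R).det ^ ((1 : ℝ) / 2)) *
        (ν + (y - X *ᵥ β) ⬝ᵥ (σ2 • R)⁻¹ *ᵥ (y - X *ᵥ β)) ^ (-(ν + n) / 2) =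
      Real.Gamma ((ν + n - p) / 2) * ν ^ (ν / 2) /
        (Real.Gamma (ν / 2) * π ^ (((n : ℝ) - p) / 2)) *
        σ2 ^ (-((n : ℝ) - p) / 2) * R.det ^ (-(1 : ℝ) / 2) *
        (Xᵀ * R⁻¹ * X).det ^ (-(1 : ℝ) / 2) *
        (ν + (y - X *ᵥ (((Xᵀ * R⁻¹ * X)⁻¹ * Xᵀ * R⁻¹) *ᵥ y)) ⬝ᵥ
            R⁻¹ *ᵥ (y - X *ᵥ (((Xᵀ * R⁻¹ * X)⁻¹ * Xᵀ * R⁻¹) *ᵥ y)) / σ2) ^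
          (-(ν + n - p) / 2) := by
  have hs : (Fintype.card (Fin p) : ℝ) / 2 < (ν + n) / 2 := by
    have : (p : ℝ) < n := by exact_mod_cast hnp
    rw [Fintype.card_fin]; linarith
  rw [neg_div, integral_const_mul, hR.integral_rpow_neg_add_weighted_residual
    (mulVec_injective_of_rank_eq_card (by simpa using hX)) y hσ hν hs,
    det_smul_rpow hR.det_pos.le hσ.le, Fintype.card_fin, Fintype.card_fin]
  have hπ : π ^ ((n : ℝ) / 2) = π ^ (((n : ℝ) - p) / 2) * π ^ ((p : ℝ) / 2) := by
    rw [← rpow_add pi_pos]; ring_nf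
  have hσn :
      σ2 ^ ((n : ℝ) * (1 / 2)) = σ2 ^ (((n : ℝ) - p) / 2) * σ2 ^ ((p : ℝ) / 2) := by
    rw [← rpow_add hσ]; ring_nf
  rw [hπ, hσn, neg_div 2 ((n : ℝ) - p), rpow_neg hσ.le, neg_div 2 (1 : ℝ),
    rpow_neg hR.det_pos.le, show (ν + n) / 2 - p / 2 = (ν + n - p) / 2 by ring,
    show (p : ℝ) / 2 - (ν + n) / 2 = -(ν + n - p) / 2 by ring]
  field_simp

/-- The Student-t likelihood integrated over the regression coefficients β
(equation (5) of the paper). -/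
theorem stmt4 (n p : ℕ) (hp : 1 ≤ p) (hnp : p < n)
    (R : Matrix (Fin n) (Fin n) ℝ) (hR : R.PosDef)
    (X : Matrix (Fin n) (Fin p) ℝ) (hX : X.rank = p)
    (y : Fin n → ℝ) (σ2 ν : ℝ) (hσ : 0 < σ2) (hν : 0 < ν) :
    ∫ β : Fin p → ℝ,
      Real.Gamma ((ν + n) / 2) * ν ^ (ν / 2) /
        (Real.Gamma (ν / 2) * π ^ ((n : ℝ) / 2) * (σ2 • R).det ^ ((1 : ℝ) / 2)) *
        (ν + (y - X *ᵥ β) ⬝ᵥ (σ2 • R)⁻¹ *ᵥ (y - X *ᵥ β)) ^ (-(ν + n) / 2) =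
      Real.Gamma ((ν + n - p) / 2) * ν ^ (ν / 2) /
        (Real.Gamma (ν / 2) * π ^ (((n : ℝ) - p) / 2)) *
        σ2 ^ (-((n : ℝ) - p) / 2) * R.det ^ (-(1 : ℝ) / 2) *
        (Xᵀ * R⁻¹ * X).det ^ (-(1 : ℝ) / 2) *
        (ν + (y - X *ᵥ (((Xᵀ * R⁻¹ * X)⁻¹ * Xᵀ * R⁻¹) *ᵥ y)) ⬝ᵥ
            R⁻¹ *ᵥ (y - X *ᵥ (((Xᵀ * R⁻¹ * X)⁻¹ * Xᵀ * R⁻¹) *ᵥ y)) / σ2) ^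
          (-(ν + n - p) / 2) :=
  stmt4_general n p hnp R hR X hX y σ2 ν hσ hν
end

section
/- Let m ≥ 1 be a natural number, let ν > 0, c > 0, and let a be a real number with 1 − m/2 < a < ν/2 + 1. Then ∫_0^∞ t^{-(m/2 + a)} (ν + c/t)^{-(ν+m)/2} dt = ν^{a − 1 − ν/2} c^{-(m/2 + a − 1)} · Γ(m/2 + a − 1) Γ(ν/2 − a + 1) / Γ((ν+m)/2). -/
open MeasureTheory Real Set

/-! The substitution `t = (c / ν) (1 - x) / x` maps `(0, 1)` onto `(0, ∞)` and turns
`t ^ (-s) (ν + c / t) ^ (-r) dt` into `c ^ (1 - s) ν ^ (s - 1 - r) x ^ (s - 2) (1 - x) ^ (r - s) dx`,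
a Beta integral `B(s - 1, r - s + 1) = Γ(s - 1) Γ(r - s + 1) / Γ(r)`. -/

theorem integral_Ioo_rpow_mul_one_sub_rpow {p q : ℝ} (hp : 0 < p) (hq : 0 < q) :
    ∫ x in Ioo (0 : ℝ) 1, x ^ (p - 1) * (1 - x) ^ (q - 1) = ProbabilityTheory.beta p q := by
  rw [ProbabilityTheory.beta_eq_betaIntegralReal p q hp hq, Complex.betaIntegral,
    intervalIntegral.integral_of_le zero_le_one, ← integral_Ioc_eq_integral_Ioo,
    ← RCLike.re_to_complex, ← integral_re]
  · refine setIntegral_congr_fun measurableSet_Ioc fun x ⟨hx0, hx1⟩ ↦ ?_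
    norm_cast
    rw [← Complex.ofReal_cpow hx0.le, ← Complex.ofReal_cpow (sub_nonneg.2 hx1),
      RCLike.re_to_complex, ← Complex.ofReal_mul, Complex.ofReal_re]
  · rw [← IntegrableOn, ← intervalIntegrable_iff_integrableOn_Ioc_of_le zero_le_one]
    exact Complex.betaIntegral_convergent (by simpa) (by simpa)

theorem image_Ioo_div_sub {k : ℝ} (hk : 0 < k) :
    (fun x ↦ k / x - k) '' Ioo 0 1 = Ioi 0 := by
  ext y
  constructor
  · rintro ⟨x, ⟨hx0, hx1⟩, rfl⟩
    simpa [sub_pos, lt_div_iff₀ hx0] using mul_lt_of_lt_one_right hk hx1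
  · intro (hy : 0 < y)
    refine ⟨k / (k + y), ⟨by positivity, (div_lt_one (by positivity)).2 (by linarith)⟩, ?_⟩
    field_simp
    ring

theorem integral_Ioi_eq_integral_Ioo_div_sub {E : Type*} [NormedAddCommGroup E]
    [NormedSpace ℝ E] {k : ℝ} (hk : 0 < k) (g : ℝ → E) :
    ∫ t in Ioi 0, g t = ∫ x in Ioo 0 1, (k / x ^ 2) • g (k / x - k) := by
  have hderiv : ∀ x ∈ Ioo (0 : ℝ) 1,
      HasDerivWithinAt (fun x ↦ k / x - k) (-(k / x ^ 2)) (Ioo 0 1) x := fun x hx ↦ by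
    simpa [div_eq_mul_inv] using
      (((hasDerivAt_inv hx.1.ne').const_mul k).sub_const k).hasDerivWithinAt
  have hinj : InjOn (fun x ↦ k / x - k) (Ioo 0 1) := fun x hx y hy hxy ↦ by
    simpa [hk.ne', div_eq_mul_inv] using hxy
  rw [← image_Ioo_div_sub hk, integral_image_eq_integral_abs_deriv_smul measurableSet_Ioo
    hderiv hinj]
  refine setIntegral_congr_fun measurableSet_Ioo fun x hx ↦ ?_
  rw [abs_neg, abs_of_pos (div_pos hk (pow_pos hx.1 2))]

theorem integral_Ioi_rpow_neg_mul_add_div_rpow_neg {ν c s r : ℝ} (hν : 0 < ν) (hc : 0 < c)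
    (hs : 1 < s) (hsr : s < r + 1) :
    ∫ t in Ioi 0, t ^ (-s) * (ν + c / t) ^ (-r) =
      c ^ (1 - s) * ν ^ (s - 1 - r) * ProbabilityTheory.beta (s - 1) (r - s + 1) := by
  rw [integral_Ioi_eq_integral_Ioo_div_sub (div_pos hc hν),
    ← integral_Ioo_rpow_mul_one_sub_rpow (by linarith) (by linarith), ← integral_const_mul]
  refine setIntegral_congr_fun measurableSet_Ioo fun x ⟨hx0, hx1⟩ ↦ ?_
  have h1x : 0 < 1 - x := by linarith
  have hsub : c / ν / x - c / ν = c / ν * (1 - x) / x := by field_simp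
  have hadd : ν + c / (c / ν * (1 - x) / x) = ν / (1 - x) := by field_simp; ring
  rw [smul_eq_mul, hsub, hadd, div_rpow (by positivity) hx0.le, mul_rpow (by positivity) h1x.le,
    div_rpow hc.le hν.le, div_rpow hν.le h1x.le]
  simp only [rpow_sub hx0, rpow_sub h1x, rpow_sub hc, rpow_sub hν, rpow_add h1x, rpow_neg hx0.le,
    rpow_neg h1x.le, rpow_neg hc.le, rpow_neg hν.le, rpow_one]
  field_simp

theorem stmt5_general (m : ℕ) (ν c a : ℝ) (hν : 0 < ν) (hc : 0 < c)
    (ha1 : 1 - (m : ℝ) / 2 < a) (ha2 : a < ν / 2 + 1) :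
    ∫ t in Set.Ioi (0 : ℝ), t ^ (-((m : ℝ) / 2 + a)) * (ν + c / t) ^ (-(ν + m) / 2) =
      ν ^ (a - 1 - ν / 2) * c ^ (-((m : ℝ) / 2 + a - 1)) *
        (Real.Gamma ((m : ℝ) / 2 + a - 1) * Real.Gamma (ν / 2 - a + 1) /
          Real.Gamma ((ν + m) / 2)) := by
  rw [neg_div, integral_Ioi_rpow_neg_mul_add_div_rpow_neg hν hc (by linarith) (by linarith),
    ProbabilityTheory.beta]
  ring_nf

/-- Integration over the scale parameter σ² of the integrated Student-t likelihood
against the prior t^{-a}, under the propriety condition of Proposition 1. -/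
theorem stmt5 (m : ℕ) (hm : 1 ≤ m) (ν c a : ℝ) (hν : 0 < ν) (hc : 0 < c)
    (ha1 : 1 - (m : ℝ) / 2 < a) (ha2 : a < ν / 2 + 1) :
    ∫ t in Set.Ioi (0 : ℝ), t ^ (-((m : ℝ) / 2 + a)) * (ν + c / t) ^ (-(ν + m) / 2) =
      ν ^ (a - 1 - ν / 2) * c ^ (-((m : ℝ) / 2 + a - 1)) *
        (Real.Gamma ((m : ℝ) / 2 + a - 1) * Real.Gamma (ν / 2 - a + 1) /
          Real.Gamma ((ν + m) / 2)) :=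
  stmt5_general m ν c a hν hc ha1 ha2
end

section
/- Let m ≥ 1 be a natural number, let ν > 0 and c > 0, and let a be a real number with a ≥ ν/2 + 1 or a ≤ 1 − m/2. Then ∫_0^∞ t^{-(m/2 + a)} (ν + c/t)^{-(ν+m)/2} dt = +∞, i.e., the function t ↦ t^{-(m/2 + a)} (ν + c/t)^{-(ν+m)/2} is not Lebesgue integrable on (0, ∞). -/
/-!
Write `p = (ν + m) / 2`. Near `0` we have `ν + c / t ≤ (ν + c) / t`, so the integrand is at least
`(ν + c) ^ (-p) * t ^ (ν / 2 - a)`, which is not integrable at `0` once `a ≥ ν / 2 + 1`. Near `∞`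
we have `ν + c / t ≤ ν + c`, so the integrand is at least `(ν + c) ^ (-p) * t ^ (-(m / 2 + a))`,
which is not integrable at `∞` once `a ≤ 1 - m / 2`. The integrand is nonnegative, so
non-integrability is the same as an infinite lower integral.
-/

open MeasureTheory Real Set

lemma IntegrableOn.rpow_of_const_mul_rpow_le {f : ℝ → ℝ} {s : Set ℝ} {K r : ℝ}
    (hf : IntegrableOn f s) (hs : MeasurableSet s) (hs0 : s ⊆ Ioi 0) (hK : 0 < K)
    (hle : ∀ t ∈ s, K * t ^ r ≤ f t) :
    IntegrableOn (fun t => t ^ r) s := by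
  have hKf : IntegrableOn (fun t => K * t ^ r) s := by
    refine hf.mono' (Measurable.aestronglyMeasurable (by fun_prop)) ?_
    filter_upwards [ae_restrict_mem hs] with t ht
    rw [Real.norm_of_nonneg (by have := rpow_pos_of_pos (hs0 ht) r; positivity)]
    exact hle t ht
  exact (integrable_const_mul_iff (isUnit_iff_ne_zero.2 hK.ne') _).1 hKf

lemma not_integrableOn_Ioi_zero_of_const_mul_rpow_le_on_Ioo {f : ℝ → ℝ} {K r : ℝ} (hK : 0 < K)
    (hr : r ≤ -1) (hle : ∀ t ∈ Ioo 0 1, K * t ^ r ≤ f t) :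
    ¬ IntegrableOn f (Ioi 0) := fun hf => by
  have h := IntegrableOn.rpow_of_const_mul_rpow_le (hf.mono_set Ioo_subset_Ioi_self)
    measurableSet_Ioo Ioo_subset_Ioi_self hK hle
  have := (intervalIntegral.integrableOn_Ioo_rpow_iff one_pos).1 h
  linarith

lemma not_integrableOn_Ioi_zero_of_const_mul_rpow_le_on_Ioi {f : ℝ → ℝ} {K r : ℝ} (hK : 0 < K)
    (hr : -1 ≤ r) (hle : ∀ t ∈ Ioi 1, K * t ^ r ≤ f t) :
    ¬ IntegrableOn f (Ioi 0) := fun hf => by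
  have h := IntegrableOn.rpow_of_const_mul_rpow_le (hf.mono_set (Ioi_subset_Ioi zero_le_one))
    measurableSet_Ioi (Ioi_subset_Ioi zero_le_one) hK hle
  have := (integrableOn_Ioi_rpow_iff one_pos).1 h
  linarith

lemma add_div_rpow_neg_ge_of_le_one {ν c p t : ℝ} (hν : 0 < ν) (hc : 0 ≤ c) (hp : 0 ≤ p)
    (ht0 : 0 < t) (ht1 : t ≤ 1) :
    (ν + c) ^ (-p) * t ^ p ≤ (ν + c / t) ^ (-p) := by
  have hle : ν + c / t ≤ (ν + c) / t := by
    rw [add_div, add_le_add_iff_right, le_div_iff₀ ht0]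
    nlinarith
  calc (ν + c) ^ (-p) * t ^ p = ((ν + c) / t) ^ (-p) := by
        rw [div_rpow (by positivity) ht0.le, rpow_neg ht0.le, div_inv_eq_mul]
    _ ≤ (ν + c / t) ^ (-p) := rpow_le_rpow_of_nonpos (by positivity) hle (neg_nonpos.2 hp)

lemma add_div_rpow_neg_ge_of_one_le {ν c p t : ℝ} (hν : 0 < ν) (hc : 0 ≤ c) (hp : 0 ≤ p)
    (ht : 1 ≤ t) :
    (ν + c) ^ (-p) ≤ (ν + c / t) ^ (-p) := by
  have ht0 : 0 < t := one_pos.trans_le ht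
  have hle : ν + c / t ≤ ν + c := by
    rw [add_le_add_iff_left, div_le_iff₀ ht0]
    nlinarith
  exact rpow_le_rpow_of_nonpos (by positivity) hle (neg_nonpos.2 hp)

lemma rpow_mul_add_div_rpow_neg_ge_of_le_one {ν c p q t : ℝ} (hν : 0 < ν) (hc : 0 ≤ c)
    (hp : 0 ≤ p) (ht0 : 0 < t) (ht1 : t ≤ 1) :
    (ν + c) ^ (-p) * t ^ (q + p) ≤ t ^ q * (ν + c / t) ^ (-p) := by
  rw [rpow_add ht0, mul_left_comm]
  exact mul_le_mul_of_nonneg_left (add_div_rpow_neg_ge_of_le_one hν hc hp ht0 ht1)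
    (by positivity)

lemma rpow_mul_add_div_rpow_neg_ge_of_one_le {ν c p q t : ℝ} (hν : 0 < ν) (hc : 0 ≤ c)
    (hp : 0 ≤ p) (ht : 1 ≤ t) :
    (ν + c) ^ (-p) * t ^ q ≤ t ^ q * (ν + c / t) ^ (-p) := by
  rw [mul_comm]
  exact mul_le_mul_of_nonneg_left (add_div_rpow_neg_ge_of_one_le hν hc hp ht)
    (rpow_nonneg (zero_le_one.trans ht) q)

theorem stmt6_general (m : ℕ) (ν c a : ℝ) (hν : 0 < ν) (hc : 0 < c)
    (ha : ν / 2 + 1 ≤ a ∨ a ≤ 1 - (m : ℝ) / 2) :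
    (∫⁻ t in Set.Ioi (0 : ℝ),
        ENNReal.ofReal (t ^ (-((m : ℝ) / 2 + a)) * (ν + c / t) ^ (-(ν + m) / 2)) = ⊤) ∧
    ¬ MeasureTheory.IntegrableOn
        (fun t : ℝ => t ^ (-((m : ℝ) / 2 + a)) * (ν + c / t) ^ (-(ν + m) / 2))
        (Set.Ioi 0) := by
  set p : ℝ := (ν + m) / 2
  have hp : 0 ≤ p := by positivity
  have hexp : -(ν + m) / 2 = -p := by ring
  have hK : 0 < (ν + c) ^ (-p) := rpow_pos_of_pos (by positivity) _
  simp only [hexp]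
  have hnot : ¬ IntegrableOn (fun t : ℝ => t ^ (-((m : ℝ) / 2 + a)) * (ν + c / t) ^ (-p))
      (Ioi 0) := by
    rcases ha with ha | ha
    · exact not_integrableOn_Ioi_zero_of_const_mul_rpow_le_on_Ioo hK
        (r := -((m : ℝ) / 2 + a) + p) (by linarith) fun t ht =>
          rpow_mul_add_div_rpow_neg_ge_of_le_one hν hc.le hp ht.1 ht.2.le
    · exact not_integrableOn_Ioi_zero_of_const_mul_rpow_le_on_Ioi hK (by linarith) fun t ht =>
        rpow_mul_add_div_rpow_neg_ge_of_one_le hν hc.le hp (le_of_lt ht)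
  refine ⟨?_, hnot⟩
  by_contra hfin
  refine hnot ((lintegral_ofReal_ne_top_iff_integrable ?_ ?_).1 hfin)
  · exact Measurable.aestronglyMeasurable (by fun_prop)
  · filter_upwards [ae_restrict_mem measurableSet_Ioi] with t (ht : 0 < t)
    positivity

/-- Divergence of the σ²-integral when the propriety condition of Proposition 1 fails. -/
theorem stmt6 (m : ℕ) (hm : 1 ≤ m) (ν c a : ℝ) (hν : 0 < ν) (hc : 0 < c)
    (ha : ν / 2 + 1 ≤ a ∨ a ≤ 1 - (m : ℝ) / 2) :
    (∫⁻ t in Set.Ioi (0 : ℝ),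
        ENNReal.ofReal (t ^ (-((m : ℝ) / 2 + a)) * (ν + c / t) ^ (-(ν + m) / 2)) = ⊤) ∧
    ¬ MeasureTheory.IntegrableOn
        (fun t : ℝ => t ^ (-((m : ℝ) / 2 + a)) * (ν + c / t) ^ (-(ν + m) / 2))
        (Set.Ioi 0) :=
  stmt6_general m ν c a hν hc ha
end

section
/- Let m ≥ 1 be a natural number and c ≥ 0 a real number. Then Γ((ν+m)/2) ν^{ν/2} (ν + c)^{-(ν+m)/2} / Γ(ν/2) tends to 2^{-m/2} e^{-c/2} as ν → +∞. -/
/-!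
Write the kernel as
`Γ(ν/2 + m/2) / (Γ(ν/2) (ν/2)^(m/2)) · 2^(-m/2) · ((1 + c/ν)^(ν+m))^(-1/2)`.
The last factor tends to `exp(-c/2)`. For the Gamma ratio, log-convexity of `Γ` compares the
slope of `log Γ` on `[x, x + a]` with its slopes `log (x - 1)` and `log (x + a)` on the adjacent
unit intervals, so `(x - 1)^a ≤ Γ(x + a) / Γ(x) ≤ (x + a)^a`, and hence
`Γ(x + a) / (Γ(x) x^a) → 1` (Wendel's limit).
-/

open Real Filter Topology Set

namespace Real

lemma tendsto_one_add_div_atTop (t : ℝ) : Tendsto (fun x : ℝ => 1 + t / x) atTop (𝓝 1) := by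
  simpa using (tendsto_const_nhds (x := t).div_atTop tendsto_id).const_add 1

lemma tendsto_one_add_div_rpow_add_exp (t b : ℝ) :
    Tendsto (fun x : ℝ => (1 + t / x) ^ (x + b)) atTop (𝓝 (exp t)) := by
  have hb : Tendsto (fun x : ℝ => (1 + t / x) ^ b) atTop (𝓝 1) := by
    simpa using (tendsto_one_add_div_atTop t).rpow_const (p := b) (Or.inl one_ne_zero)
  rw [← mul_one (exp t)]
  refine ((tendsto_one_add_div_rpow_exp t).mul hb).congr' ?_
  filter_upwards [(tendsto_one_add_div_atTop t).eventually_const_lt one_pos] with x hx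
  exact (rpow_add hx _ _).symm

lemma log_Gamma_add_one_sub {x : ℝ} (hx : 0 < x) :
    log (Gamma (x + 1)) - log (Gamma x) = log x := by
  rw [Gamma_add_one hx.ne', log_mul hx.ne' (Gamma_pos_of_pos hx).ne', add_sub_cancel_right]

lemma rpow_sub_one_le_Gamma_add_div_Gamma {x a : ℝ} (hx : 1 < x) (ha : 0 ≤ a) :
    (x - 1) ^ a ≤ Gamma (x + a) / Gamma x := by
  rcases ha.eq_or_lt with rfl | ha
  · simp [(Gamma_pos_of_pos (zero_lt_one.trans hx)).ne']
  have hslope := convexOn_log_Gamma.slope_mono_adjacent (x := x - 1) (y := x) (z := x + a)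
    (mem_Ioi.2 (by linarith)) (mem_Ioi.2 (by linarith)) (by linarith) (by linarith)
  have hunit := log_Gamma_add_one_sub (x := x - 1) (by linarith)
  simp only [Function.comp_apply, sub_add_cancel, sub_sub_cancel, div_one,
    add_sub_cancel_left] at hslope hunit
  rw [hunit, le_div_iff₀ ha] at hslope
  rw [← log_le_log_iff (by positivity) (div_pos (Gamma_pos_of_pos (by linarith))
    (Gamma_pos_of_pos (by linarith))), log_rpow (by linarith),
    log_div (Gamma_pos_of_pos (by linarith)).ne' (Gamma_pos_of_pos (by linarith)).ne']
  linarith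

lemma Gamma_add_div_Gamma_le_rpow {x a : ℝ} (hx : 0 < x) (ha : 0 ≤ a) :
    Gamma (x + a) / Gamma x ≤ (x + a) ^ a := by
  rcases ha.eq_or_lt with rfl | ha
  · simp [(Gamma_pos_of_pos hx).ne']
  have hslope := convexOn_log_Gamma.slope_mono_adjacent (x := x) (y := x + a) (z := x + a + 1)
    (mem_Ioi.2 hx) (mem_Ioi.2 (by linarith)) (by linarith) (by linarith)
  simp only [Function.comp_apply, add_sub_cancel_left, div_one] at hslope
  rw [log_Gamma_add_one_sub (by linarith), div_le_iff₀ ha] at hslope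
  rw [← log_le_log_iff (div_pos (Gamma_pos_of_pos (by linarith)) (Gamma_pos_of_pos hx))
    (by positivity), log_rpow (by linarith),
    log_div (Gamma_pos_of_pos (by linarith)).ne' (Gamma_pos_of_pos hx).ne']
  linarith

theorem tendsto_Gamma_add_div_Gamma_mul_rpow {a : ℝ} (ha : 0 ≤ a) :
    Tendsto (fun x => Gamma (x + a) / (Gamma x * x ^ a)) atTop (𝓝 1) := by
  have hlim (b : ℝ) : Tendsto (fun x : ℝ => (1 + b / x) ^ a) atTop (𝓝 1) := by
    simpa using (tendsto_one_add_div_atTop b).rpow_const (p := a) (Or.inr ha)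
  have hquot {x b : ℝ} (hx : 0 < x) (hb : 0 ≤ x + b) :
      (1 + b / x) ^ a = (x + b) ^ a / x ^ a := by
    rw [← div_rpow hb hx.le, add_div, div_self hx.ne']
  refine tendsto_of_tendsto_of_tendsto_of_le_of_le' (hlim (-1)) (hlim a) ?_ ?_
  · filter_upwards [eventually_gt_atTop 1] with x hx
    rw [hquot (by linarith) (by linarith), ← sub_eq_add_neg, ← div_div]
    gcongr
    exact rpow_sub_one_le_Gamma_add_div_Gamma hx ha
  · filter_upwards [eventually_gt_atTop 0] with x hx
    rw [hquot hx (by linarith), ← div_div]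
    gcongr
    exact Gamma_add_div_Gamma_le_rpow hx ha

lemma Gamma_mul_rpow_mul_rpow_div_Gamma_eq {ν c s : ℝ} (hν : 0 < ν) (hνc : 0 < ν + c) :
    Gamma ((ν + s) / 2) * ν ^ (ν / 2) * (ν + c) ^ (-(ν + s) / 2) / Gamma (ν / 2) =
      Gamma (ν / 2 + s / 2) / (Gamma (ν / 2) * (ν / 2) ^ (s / 2)) *
        (2 ^ (-s / 2) * ((1 + c / ν) ^ (ν + s)) ^ (-1 / 2 : ℝ)) := by
  have hc : 1 + c / ν = (ν + c) / ν := by field_simp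
  rw [hc, ← rpow_mul (by positivity), div_rpow hνc.le hν.le, div_rpow hν.le zero_le_two,
    show (ν + s) * (-1 / 2) = -(ν + s) / 2 by ring, neg_div, neg_div, rpow_neg zero_le_two,
    rpow_neg hν.le, rpow_neg hνc.le, show (ν + s) / 2 = ν / 2 + s / 2 by ring, rpow_add hν,
    ← add_div]
  have := Gamma_pos_of_pos (half_pos hν)
  field_simp

end Real

theorem stmt11_general (m : ℕ) (c : ℝ) :
    Tendsto
      (fun ν : ℝ => Real.Gamma ((ν + m) / 2) * ν ^ (ν / 2) * (ν + c) ^ (-(ν + m) / 2) /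
        Real.Gamma (ν / 2))
      atTop (nhds ((2 : ℝ) ^ (-(m : ℝ) / 2) * Real.exp (-c / 2))) := by
  have hGamma := (tendsto_Gamma_add_div_Gamma_mul_rpow (a := (m : ℝ) / 2) (by positivity)).comp
    (tendsto_id.atTop_div_const two_pos)
  have hexp := (tendsto_one_add_div_rpow_add_exp c m).rpow_const (p := -1 / 2)
    (Or.inl (exp_pos c).ne')
  rw [← exp_mul, show c * (-1 / 2) = -c / 2 by ring] at hexp
  have hprod := hGamma.mul (hexp.const_mul ((2 : ℝ) ^ (-(m : ℝ) / 2)))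
  rw [one_mul] at hprod
  refine hprod.congr' ?_
  filter_upwards [eventually_gt_atTop 0, eventually_gt_atTop (-c)] with ν hν hνc
  exact (Gamma_mul_rpow_mul_rpow_div_Gamma_eq hν (by linarith)).symm

/-- The Student-t integrated likelihood kernel converges to the Gaussian one as the
degrees of freedom ν → ∞. -/
theorem stmt11 (m : ℕ) (hm : 1 ≤ m) (c : ℝ) (hc : 0 ≤ c) :
    Tendsto
      (fun ν : ℝ => Real.Gamma ((ν + m) / 2) * ν ^ (ν / 2) * (ν + c) ^ (-(ν + m) / 2) /
        Real.Gamma (ν / 2))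
      atTop (nhds ((2 : ℝ) ^ (-(m : ℝ) / 2) * Real.exp (-c / 2))) :=
  stmt11_general m c
end

section
/- Let m ≥ 1 be a natural number. Define ψ₁(x) = ∑_{k=0}^∞ 1/(x+k)² for x > 0, τ(ν) = m + ν + 2, and D(ν) = −( (2m/ν)·(τ(ν)+2)/(τ(ν)(τ(ν)−2)) + ψ₁((ν+m)/2) − ψ₁(ν/2) ). Then D(ν) = O(ν^{-3}) as ν → +∞; that is, there exist constants K > 0 and ν₀ such that |D(ν)| ≤ K ν^{-3} for all ν ≥ ν₀. -/
/-!
Euler–Maclaurin to second order: `ψ₁ x = 1/x + 1/(2x²) + r(x)` with `0 ≤ r(x) ≤ 1/(6x³)`, obtained by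
splitting each term `1/a²` into two telescoping differences and a remainder `1/(2a²(a+1)²)`, itself
dominated by the telescoping difference `(1/a³ - 1/(a+1)³)/6`. Inserting this expansion at
`(ν+m)/2` and `ν/2`, the `1/ν` and `1/ν²` terms cancel against the rational part of `D(ν)` up to
`O(ν⁻⁴)`, so only the two remainders, each `O(ν⁻³)`, are left.
-/

open Filter Topology

noncomputable def psi1 (x : ℝ) : ℝ := ∑' k : ℕ, 1 / (x + k) ^ 2

lemma hasSum_sub_succ_of_antitone {g : ℕ → ℝ} (hg : Antitone g)
    (hlim : Tendsto g atTop (𝓝 0)) : HasSum (fun k => g k - g (k + 1)) (g 0) := by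
  rw [hasSum_iff_tendsto_nat_of_nonneg (fun k => sub_nonneg.2 (hg k.le_succ))]
  simp_rw [Finset.sum_range_sub']
  simpa using tendsto_const_nhds.sub hlim

lemma hasSum_one_div_pow_sub_one_div_pow_succ {x : ℝ} (hx : 0 < x) {n : ℕ} (hn : n ≠ 0) :
    HasSum (fun k : ℕ => 1 / (x + k) ^ n - 1 / (x + k + 1) ^ n) (1 / x ^ n) := by
  have hanti : Antitone fun k : ℕ => 1 / (x + k) ^ n := antitone_nat_of_succ_le fun k => by
    push_cast
    gcongr
    linarith
  have hlim : Tendsto (fun k : ℕ => 1 / (x + k) ^ n) atTop (𝓝 0) := by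
    simp_rw [one_div]
    exact tendsto_inv_atTop_zero.comp <| (tendsto_pow_atTop hn).comp <|
      tendsto_atTop_add_const_left _ x tendsto_natCast_atTop_atTop
  simpa [add_assoc] using hasSum_sub_succ_of_antitone hanti hlim

lemma psi1_sub_mem_Icc {x : ℝ} (hx : 0 < x) :
    psi1 x - (1 / x + 1 / (2 * x ^ 2)) ∈ Set.Icc 0 (1 / (6 * x ^ 3)) := by
  have ha : ∀ k : ℕ, 0 < x + k := fun k => by positivity
  have h1 := hasSum_one_div_pow_sub_one_div_pow_succ hx one_ne_zero
  have h2 := hasSum_one_div_pow_sub_one_div_pow_succ hx two_ne_zero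
  have h3 := hasSum_one_div_pow_sub_one_div_pow_succ hx three_ne_zero
  set r : ℕ → ℝ := fun k => 1 / (2 * (x + k) ^ 2 * (x + k + 1) ^ 2) with hr_def
  -- `1 / a ^ 2 = (1 / a - 1 / (a + 1)) + (1 / a ^ 2 - 1 / (a + 1) ^ 2) / 2 + 1 / (2 * a ^ 2 * (a + 1) ^ 2)`
  have hr_nonneg : ∀ k, 0 ≤ r k := fun k => by have := ha k; positivity
  have hr_le : ∀ k, r k ≤ 1 / 6 * (1 / (x + k) ^ 3 - 1 / (x + k + 1) ^ 3) := fun k => by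
    have := ha k
    rw [hr_def, div_le_iff₀ (by positivity)]
    field_simp
    nlinarith
  have hr : Summable r := .of_nonneg_of_le hr_nonneg hr_le (h3.summable.mul_left _)
  have hpsi : HasSum (fun k : ℕ => 1 / (x + k) ^ 2) (1 / x + 1 / (2 * x ^ 2) + ∑' k, r k) := by
    convert (h1.add (h2.mul_left (1 / 2))).add hr.hasSum using 1
    · funext k
      have := ha k
      simp only [hr_def]
      field_simp
      ring
    · ring
  rw [psi1, hpsi.tsum_eq, add_sub_cancel_left]
  refine ⟨tsum_nonneg hr_nonneg, ?_⟩
  calc ∑' k, r k ≤ 1 / 6 * (1 / x ^ 3) := hasSum_le hr_le hr.hasSum (h3.mul_left _)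
    _ = 1 / (6 * x ^ 3) := by ring

lemma abs_psi1_sub_sub_le {x y : ℝ} (hx : 0 < x) (hxy : x ≤ y) :
    |(psi1 y - (1 / y + 1 / (2 * y ^ 2))) - (psi1 x - (1 / x + 1 / (2 * x ^ 2)))|
      ≤ 1 / (6 * x ^ 3) := by
  have hx' := psi1_sub_mem_Icc hx
  have hy := psi1_sub_mem_Icc (hx.trans_le hxy)
  have hyx : 1 / (6 * y ^ 3) ≤ 1 / (6 * x ^ 3) := by gcongr
  exact abs_sub_le_of_nonneg_of_le hy.1 (hy.2.trans hyx) hx'.1 hx'.2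

lemma abs_rational_part_le {m ν : ℝ} (hm : 0 ≤ m) (hν : 0 < ν) :
    |2 * m / ν * ((m + ν + 2) + 2) / ((m + ν + 2) * ((m + ν + 2) - 2)) +
        (1 / ((ν + m) / 2) + 1 / (2 * ((ν + m) / 2) ^ 2)) - (1 / (ν / 2) + 1 / (2 * (ν / 2) ^ 2))|
      ≤ 2 * m * (m + 4) / ν ^ 4 := by
  have hνm : 0 < ν + m := by linarith
  have heq : 2 * m / ν * ((m + ν + 2) + 2) / ((m + ν + 2) * ((m + ν + 2) - 2)) +
        (1 / ((ν + m) / 2) + 1 / (2 * ((ν + m) / 2) ^ 2)) - (1 / (ν / 2) + 1 / (2 * (ν / 2) ^ 2))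
      = -(2 * m * ((m + 4) * ν + m * (m + 2)) / (ν ^ 2 * (ν + m) ^ 2 * (ν + m + 2))) := by
    have : m + ν + 2 - 2 ≠ 0 := by linarith
    field_simp
    ring
  rw [heq, abs_neg, abs_of_nonneg (by positivity), div_le_div_iff₀ (by positivity) (by positivity)]
  have hnum : (m + 4) * ν + m * (m + 2) ≤ (m + 4) * (ν + m + 2) := by nlinarith
  have hden : ν ^ 2 ≤ (ν + m) ^ 2 := by gcongr; linarith
  nlinarith [mul_le_mul hnum (mul_le_mul_of_nonneg_left hden (sq_nonneg ν)) (by positivity)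
    (by positivity)]

theorem stmt14_general (m : ℕ) :
    ∃ K > (0 : ℝ), ∃ ν₀ : ℝ, ∀ ν ≥ ν₀,
      |-(2 * (m : ℝ) / ν * (((m : ℝ) + ν + 2) + 2) /
            (((m : ℝ) + ν + 2) * (((m : ℝ) + ν + 2) - 2)) +
          psi1 ((ν + m) / 2) - psi1 (ν / 2))| ≤ K / ν ^ 3 := by
  refine ⟨2 * m * (m + 4) + 2, by positivity, 1, fun ν hν => ?_⟩
  have hν0 : 0 < ν := by linarith
  have hR := abs_rational_part_le (m.cast_nonneg (α := ℝ)) hν0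
  set x := ν / 2
  set y := (ν + m) / 2
  set e : ℝ → ℝ := fun t => psi1 t - (1 / t + 1 / (2 * t ^ 2))
  have hsplit : ∀ a : ℝ, -(a + psi1 y - psi1 x) =
      -((a + (1 / y + 1 / (2 * y ^ 2)) - (1 / x + 1 / (2 * x ^ 2))) + (e y - e x)) := by
    intro a
    simp only [e]
    ring
  have he : |e y - e x| ≤ 1 / (6 * x ^ 3) :=
    abs_psi1_sub_sub_le (by positivity) (by simp only [x, y]; linarith [m.cast_nonneg (α := ℝ)])
  have hνpow : 2 * m * (m + 4) / ν ^ 4 ≤ 2 * m * (m + 4) / ν ^ 3 :=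
    div_le_div_of_nonneg_left (by positivity) (by positivity) (pow_le_pow_right₀ hν (by norm_num))
  have hrem : 1 / (6 * x ^ 3) ≤ 2 / ν ^ 3 := by
    simp only [x]
    rw [div_le_div_iff₀ (by positivity) (by positivity)]
    nlinarith [pow_pos hν0 3]
  rw [hsplit, abs_neg]
  calc _ ≤ _ := abs_add_le _ _
    _ ≤ 2 * m * (m + 4) / ν ^ 3 + 2 / ν ^ 3 := by linarith
    _ = _ := by ring

/-- The entry D(ν) of the reference prior information matrix is O(ν^{-3}) as ν → ∞. -/
theorem stmt14 (m : ℕ) (hm : 1 ≤ m) :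
    ∃ K > (0 : ℝ), ∃ ν₀ : ℝ, ∀ ν ≥ ν₀,
      |-(2 * (m : ℝ) / ν * (((m : ℝ) + ν + 2) + 2) /
            (((m : ℝ) + ν + 2) * (((m : ℝ) + ν + 2) - 2)) +
          psi1 ((ν + m) / 2) - psi1 (ν / 2))| ≤ K / ν ^ 3 :=
  stmt14_general m
end

section
/- Let ε > 0 and let a be a real number with a < 3 + ε/2. Define A(ν) = ν^{a−1} Γ(ν/2 − a + 1)/Γ(ν/2). Then the function ν ↦ A(ν) ν^{-3/2} is Lebesgue integrable on (4 + ε, +∞), i.e., ∫_{4+ε}^{+∞} A(ν) ν^{-3/2} dν < +∞. -/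
open MeasureTheory Real


-- Γ(x+n) ≤ (x+n)^n Γ(x)
lemma gamma_add_nat_le (x : ℝ) (hx : 0 < x) (n : ℕ) :
    Real.Gamma (x + n) ≤ (x + n) ^ n * Real.Gamma x := by
  induction n with
  | zero => simp
  | succ n ih =>
    have hxn : (0:ℝ) < x + n := by positivity
    have h1 : Real.Gamma (x + (n+1:ℕ)) = (x + n) * Real.Gamma (x + n) := by
      push_cast
      rw [show x + ((n:ℝ)+1) = (x + n) + 1 by ring, Real.Gamma_add_one hxn.ne']
    rw [h1]
    calc (x + n) * Real.Gamma (x + n) ≤ (x + n) * ((x + n) ^ n * Real.Gamma x) := by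
          exact mul_le_mul_of_nonneg_left ih hxn.le
      _ ≤ (x + (n+1:ℕ)) ^ (n+1) * Real.Gamma x := by
          have hG := (Real.Gamma_pos_of_pos hx).le
          have h2 : (x + n) * ((x+n)^n * Real.Gamma x) = (x+n)^(n+1) * Real.Gamma x := by ring
          rw [h2]
          apply mul_le_mul_of_nonneg_right _ hG
          apply pow_le_pow_left₀ hxn.le
          push_cast; linarith

-- x^n Γ(x) ≤ Γ(x+n)
lemma le_gamma_add_nat (x : ℝ) (hx : 0 < x) (n : ℕ) :
    x ^ n * Real.Gamma x ≤ Real.Gamma (x + n) := by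
  induction n with
  | zero => simp
  | succ n ih =>
    have hxn : (0:ℝ) < x + n := by positivity
    have h1 : Real.Gamma (x + (n+1:ℕ)) = (x + n) * Real.Gamma (x + n) := by
      push_cast
      rw [show x + ((n:ℝ)+1) = (x + n) + 1 by ring, Real.Gamma_add_one hxn.ne']
    rw [h1]
    calc x ^ (n+1) * Real.Gamma x = x * (x ^ n * Real.Gamma x) := by ring
      _ ≤ x * Real.Gamma (x + n) := by
          exact mul_le_mul_of_nonneg_left ih hx.le
      _ ≤ (x + n) * Real.Gamma (x + n) := by
          apply mul_le_mul_of_nonneg_right _ (Real.Gamma_pos_of_pos hxn).le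
          linarith

-- interpolation: for 0 < t < n, Γ(x+t) ≤ Γ(x)^(1-t/n) Γ(x+n)^(t/n)
lemma gamma_interp (x t : ℝ) (n : ℕ) (hx : 0 < x) (ht : 0 < t) (htn : t < n) :
    Real.Gamma (x + t) ≤ Real.Gamma x ^ (1 - t/n) * Real.Gamma (x + n) ^ (t/n) := by
  have hn : (0:ℝ) < n := lt_trans ht htn
  have hb : (0:ℝ) < t/n := div_pos ht hn
  have ha' : (0:ℝ) < 1 - t/n := by
    have : t/n < 1 := (div_lt_one hn).mpr htn
    linarith
  have key := Real.Gamma_mul_add_mul_le_rpow_Gamma_mul_rpow_Gamma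
    (s := x) (t := x + n) hx (by positivity) ha' hb (by ring)
  have : (1 - t/n) * x + t/n * (x + n) = x + t := by
    field_simp; ring
  rwa [this] at key

-- upper bound, nonneg t: Γ(x+t) ≤ (x+n)^t Γ(x), for 0 ≤ t < n
lemma gamma_ratio_upper_nonneg (x t : ℝ) (n : ℕ) (hx : 0 < x) (ht : 0 ≤ t) (htn : t < n) :
    Real.Gamma (x + t) ≤ (x + n) ^ t * Real.Gamma x := by
  rcases eq_or_lt_of_le ht with h | h
  · subst h; simp
  have hn : (0:ℝ) < n := lt_trans h htn
  have hxn : (0:ℝ) < x + n := by positivity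
  have hG : (0:ℝ) < Real.Gamma x := Real.Gamma_pos_of_pos hx
  have hGn : (0:ℝ) < Real.Gamma (x + n) := Real.Gamma_pos_of_pos (by positivity)
  calc Real.Gamma (x + t) ≤ Real.Gamma x ^ (1 - t/n) * Real.Gamma (x + n) ^ (t/n) :=
        gamma_interp x t n hx h htn
    _ ≤ Real.Gamma x ^ (1 - t/n) * ((x + n) ^ n * Real.Gamma x) ^ (t/n) := by
        apply mul_le_mul_of_nonneg_left _ (Real.rpow_nonneg hG.le _)
        exact Real.rpow_le_rpow hGn.le (gamma_add_nat_le x hx n) (by positivity)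
    _ = (x + n) ^ t * Real.Gamma x := by
        rw [Real.mul_rpow (by positivity) hG.le, ← Real.rpow_natCast (x+n) n,
          ← Real.rpow_mul hxn.le, show (n:ℝ) * (t/n) = t by field_simp,
          mul_comm ((x+(n:ℝ))^t) (Real.Gamma x ^ (t/n)), ← mul_assoc,
          ← Real.rpow_add hG, show 1 - t/n + t/n = 1 by ring, Real.rpow_one, mul_comm]

-- upper bound, negative t: Γ(x+t) ≤ (x-n)^t Γ(x), for -n < t < 0, n < x
lemma gamma_ratio_upper_neg (x t : ℝ) (n : ℕ) (ht : t < 0) (htn : -t < n) (hx : (n:ℝ) < x) :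
    Real.Gamma (x + t) ≤ (x - n) ^ t * Real.Gamma x := by
  have hn : (0:ℝ) < n := lt_trans (by linarith) htn
  have hy : (0:ℝ) < x - n := by linarith
  have hx0 : (0:ℝ) < x := by linarith
  have hG : (0:ℝ) < Real.Gamma x := Real.Gamma_pos_of_pos hx0
  have hGy : (0:ℝ) < Real.Gamma (x - n) := Real.Gamma_pos_of_pos hy
  have hb : (0:ℝ) < -t/n := div_pos (by linarith) hn
  have ha' : (0:ℝ) < 1 + t/n := by
    have : -t/n < 1 := (div_lt_one hn).mpr htn
    rw [neg_div] at this; linarith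
  -- Γ(x+t) ≤ Γ(x-n)^(-t/n) * Γ(x)^(1+t/n)
  have key := Real.Gamma_mul_add_mul_le_rpow_Gamma_mul_rpow_Gamma
    (s := x - n) (t := x) hy hx0 hb ha' (by ring)
  have heq : -t/n * (x - n) + (1 + t/n) * x = x + t := by field_simp; ring
  rw [heq] at key
  -- Γ(x-n) ≤ (x-n)^(-n) Γ(x)
  have hlow := le_gamma_add_nat (x - n) hy n
  rw [show x - n + n = x by ring] at hlow
  have hGyle : Real.Gamma (x - n) ≤ (x - n) ^ (-(n:ℝ)) * Real.Gamma x := by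
    rw [Real.rpow_neg hy.le, Real.rpow_natCast, inv_mul_eq_div,
      le_div_iff₀ (pow_pos hy n), mul_comm]
    exact hlow
  calc Real.Gamma (x + t) ≤ Real.Gamma (x - n) ^ (-t/n) * Real.Gamma x ^ (1 + t/n) := key
    _ ≤ ((x - n) ^ (-(n:ℝ)) * Real.Gamma x) ^ (-t/n) * Real.Gamma x ^ (1 + t/n) := by
        apply mul_le_mul_of_nonneg_right _ (Real.rpow_nonneg hG.le _)
        exact Real.rpow_le_rpow hGy.le hGyle (by positivity)
    _ = (x - n) ^ t * Real.Gamma x := by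
        rw [Real.mul_rpow (by positivity) hG.le, ← Real.rpow_mul hy.le,
          show -(n:ℝ) * (-t/n) = t by field_simp, mul_assoc, ← Real.rpow_add hG,
          show -t/n + (1 + t/n) = 1 by ring, Real.rpow_one]

/-- Integrability of A(ν) ν^{-3/2} on (4 + ε, ∞), used in the proof of posterior
propriety (Theorem 2 of the paper). -/
theorem stmt16 (ε a : ℝ) (hε : 0 < ε) (ha : a < 3 + ε / 2) :
    MeasureTheory.IntegrableOn
      (fun ν : ℝ =>
        ν ^ (a - 1) * Real.Gamma (ν / 2 - a + 1) / Real.Gamma (ν / 2) *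
          ν ^ (-(3 : ℝ) / 2))
      (Set.Ioi (4 + ε)) := by
  set f : ℝ → ℝ := fun ν : ℝ =>
    ν ^ (a - 1) * Real.Gamma (ν / 2 - a + 1) / Real.Gamma (ν / 2) *
      ν ^ (-(3 : ℝ) / 2) with hfdef
  set t : ℝ := 1 - a with htdef
  set n : ℕ := ⌈|t|⌉₊ + 1 with hndef
  have htn : |t| < n := by
    calc |t| ≤ (⌈|t|⌉₊ : ℝ) := Nat.le_ceil _
      _ < n := by exact_mod_cast Nat.lt_succ_self _
  set M : ℝ := max (4 + ε) (4 * (n : ℝ) + 4) with hMdef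
  have hM1 : 4 + ε ≤ M := le_max_left _ _
  have hM2 : 4 * (n : ℝ) + 4 ≤ M := le_max_right _ _
  have hMpos : 0 < M := lt_of_lt_of_le (by linarith) hM1
  -- continuity of f on Ici (4 + ε)
  have hcont : ContinuousOn f (Set.Ici (4 + ε)) := by
    intro ν hν
    have hν0 : 0 < ν := lt_of_lt_of_le (by linarith) hν
    have harg : 0 < ν / 2 - a + 1 := by
      have : 4 + ε ≤ ν := hν
      linarith
    have chalf : ContinuousAt (fun ν : ℝ => ν / 2 - a + 1) ν :=
      (((continuous_id.div_const 2).sub continuous_const).add continuous_const).continuousAt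
    have cG1 : ContinuousAt (fun ν : ℝ => Real.Gamma (ν / 2 - a + 1)) ν :=
      ((Real.differentiableAt_Gamma (fun m => by
        have : -(m : ℝ) ≤ 0 := neg_nonpos.mpr (Nat.cast_nonneg m)
        exact (lt_of_le_of_lt this harg).ne')).continuousAt).comp chalf
    have cG2 : ContinuousAt (fun ν : ℝ => Real.Gamma (ν / 2)) ν :=
      ((Real.differentiableAt_Gamma (fun m => by
        have : -(m : ℝ) ≤ 0 := neg_nonpos.mpr (Nat.cast_nonneg m)
        exact (lt_of_le_of_lt this (by linarith : (0:ℝ) < ν / 2)).ne')).continuousAt).comp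
        (continuous_id.div_const 2).continuousAt
    have cr1 : ContinuousAt (fun ν : ℝ => ν ^ (a - 1)) ν :=
      Real.continuousAt_rpow_const _ _ (Or.inl hν0.ne')
    have cr2 : ContinuousAt (fun ν : ℝ => ν ^ (-(3:ℝ) / 2)) ν :=
      Real.continuousAt_rpow_const _ _ (Or.inl hν0.ne')
    have hGne : Real.Gamma (ν / 2) ≠ 0 :=
      (Real.Gamma_pos_of_pos (by linarith : (0:ℝ) < ν / 2)).ne'
    exact (((cr1.mul cG1).div cG2 hGne).mul cr2).continuousWithinAt
  -- integrable on the bounded piece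
  have h1 : MeasureTheory.IntegrableOn f (Set.Ioc (4 + ε) M) :=
    ((hcont.mono Set.Icc_subset_Ici_self).integrableOn_Icc).mono_set Set.Ioc_subset_Icc_self
  -- integrable on the tail
  have h2 : MeasureTheory.IntegrableOn f (Set.Ioi M) := by
    have hint : MeasureTheory.IntegrableOn
        (fun ν : ℝ => (4:ℝ) ^ |t| * ν ^ (-(3:ℝ) / 2)) (Set.Ioi M) :=
      (integrableOn_Ioi_rpow_of_lt (by norm_num) hMpos).const_mul _
    apply hint.mono' ((hcont.mono (fun ν hν => le_trans hM1 (le_of_lt hν))).aestronglyMeasurable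
      measurableSet_Ioi)
    filter_upwards [MeasureTheory.ae_restrict_mem measurableSet_Ioi] with ν hν
    have hνM : M < ν := hν
    have hν0 : (0:ℝ) < ν := lt_trans hMpos hνM
    have hx0 : (0:ℝ) < ν / 2 := by linarith
    have hxn : 2 * (n:ℝ) + 2 < ν / 2 := by linarith
    have hnx : (n:ℝ) < ν / 2 := by
      have : (0:ℝ) ≤ (n:ℝ) := Nat.cast_nonneg n
      linarith
    have hGx : 0 < Real.Gamma (ν / 2) := Real.Gamma_pos_of_pos hx0
    have hargeq : ν / 2 - a + 1 = ν / 2 + t := by rw [htdef]; ring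
    -- ratio bound
    have hratio : Real.Gamma (ν / 2 + t) ≤ (4:ℝ) ^ |t| * ν ^ t * Real.Gamma (ν / 2) := by
      rcases le_or_gt 0 t with htpos | htneg
      · have hb1 : Real.Gamma (ν / 2 + t) ≤ (ν / 2 + n) ^ t * Real.Gamma (ν / 2) :=
          gamma_ratio_upper_nonneg (ν / 2) t n hx0 htpos
            (lt_of_le_of_lt (le_abs_self t) htn)
        have hb2 : (ν / 2 + (n:ℝ)) ^ t ≤ ν ^ t := by
          apply Real.rpow_le_rpow (by positivity) (by linarith) htpos
        have h14 : (1:ℝ) ≤ (4:ℝ) ^ |t| :=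
          Real.one_le_rpow (by norm_num) (abs_nonneg t)
        calc Real.Gamma (ν / 2 + t) ≤ (ν / 2 + n) ^ t * Real.Gamma (ν / 2) := hb1
          _ ≤ ν ^ t * Real.Gamma (ν / 2) := by
              exact mul_le_mul_of_nonneg_right hb2 hGx.le
          _ ≤ (4:ℝ) ^ |t| * ν ^ t * Real.Gamma (ν / 2) := by
              nlinarith [Real.rpow_nonneg (le_of_lt hν0) t, hGx.le,
                mul_nonneg (Real.rpow_nonneg (le_of_lt hν0) t) hGx.le]
      · have hb1 : Real.Gamma (ν / 2 + t) ≤ (ν / 2 - n) ^ t * Real.Gamma (ν / 2) :=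
          gamma_ratio_upper_neg (ν / 2) t n htneg
            (lt_of_le_of_lt (neg_le_abs t) htn) hnx
        have hb2 : (ν / 2 - (n:ℝ)) ^ t ≤ (ν / 4) ^ t := by
          apply Real.rpow_le_rpow_of_nonpos (by linarith) (by linarith) htneg.le
        have hb3 : (ν / 4) ^ t = (4:ℝ) ^ (-t) * ν ^ t := by
          rw [Real.div_rpow (le_of_lt hν0) (by norm_num), Real.rpow_neg (by norm_num)]
          field_simp
        have habs : |t| = -t := abs_of_neg htneg
        calc Real.Gamma (ν / 2 + t) ≤ (ν / 2 - n) ^ t * Real.Gamma (ν / 2) := hb1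
          _ ≤ (ν / 4) ^ t * Real.Gamma (ν / 2) := mul_le_mul_of_nonneg_right hb2 hGx.le
          _ = (4:ℝ) ^ |t| * ν ^ t * Real.Gamma (ν / 2) := by rw [hb3, habs]
    -- final bound
    have hfnn : 0 ≤ f ν := by
      have hGarg : 0 ≤ Real.Gamma (ν / 2 - a + 1) := by
        apply (Real.Gamma_pos_of_pos _).le
        rw [hargeq]
        have : -((n:ℝ)) ≤ t := by
          have := neg_abs_le t
          linarith [htn.le]
        linarith
      have : 0 ≤ ν ^ (a - 1) := Real.rpow_nonneg hν0.le _
      have : 0 ≤ ν ^ (-(3:ℝ) / 2) := Real.rpow_nonneg hν0.le _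
      positivity
    rw [Real.norm_of_nonneg hfnn]
    have key : f ν ≤ ν ^ (a - 1) * ((4:ℝ) ^ |t| * ν ^ t) * ν ^ (-(3:ℝ) / 2) := by
      rw [hfdef]
      simp only
      apply mul_le_mul_of_nonneg_right _ (Real.rpow_nonneg hν0.le _)
      rw [div_le_iff₀ hGx, hargeq]
      calc ν ^ (a - 1) * Real.Gamma (ν / 2 + t)
          ≤ ν ^ (a - 1) * ((4:ℝ) ^ |t| * ν ^ t * Real.Gamma (ν / 2)) :=
            mul_le_mul_of_nonneg_left hratio (Real.rpow_nonneg hν0.le _)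
        _ = ν ^ (a - 1) * ((4:ℝ) ^ |t| * ν ^ t) * Real.Gamma (ν / 2) := by ring
    refine key.trans_eq ?_
    have hpow : ν ^ (a - 1) * ν ^ t = 1 := by
      rw [← Real.rpow_add hν0, htdef, show a - 1 + (1 - a) = 0 by ring, Real.rpow_zero]
    calc ν ^ (a - 1) * ((4:ℝ) ^ |t| * ν ^ t) * ν ^ (-(3:ℝ) / 2)
        = (4:ℝ) ^ |t| * (ν ^ (a - 1) * ν ^ t) * ν ^ (-(3:ℝ) / 2) := by ring
      _ = (4:ℝ) ^ |t| * ν ^ (-(3:ℝ) / 2) := by rw [hpow]; ring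
  exact (h1.union h2).mono_set (fun ν hν => by
    rcases le_or_gt ν M with h | h
    · exact Or.inl ⟨hν, h⟩
    · exact Or.inr h)
end
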